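/- The operators on the r-colored fermionic Fock space 𝓕^r satisfy the full Cl^r anti-commutation relations: for all colors i, j ∈ Fin r and all integers k, l, one has ψ_i(k)ψ_j(l) + ψ_j(l)ψ_i(k) = 0, ψ*_i(k)ψ*_j(l) + ψ*_j(l)ψ*_i(k) = 0, and ψ_i(k)ψ*_j(l) + ψ*_j(l)ψ_i(k) = δ_{i,j}·δ_{k,l}·id. -/

import Mathlib

open scoped Classical

/-- A semi-infinite monomial: a strictly decreasing sequence `i : ℕ → ℤ`
(written `i₀ > i₁ > i₂ > ⋯`) such that `i n = m - n` for all sufficiently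
large `n`, for some integer `m` (the charge). -/
structure SIM : Type where
  seq : ℕ → ℤ
  strictAnti : StrictAnti seq
  charge_exists : ∃ m : ℤ, ∃ N : ℕ, ∀ n ≥ N, seq n = m - n

namespace SIM

/-- `v` has charge `m` if `v n = m - n` for all sufficiently large `n`. -/
def HasCharge (v : SIM) (m : ℤ) : Prop :=
  ∃ N : ℕ, ∀ n ≥ N, v.seq n = m - n

/-- The charge of a semi-infinite monomial. -/
noncomputable def charge (v : SIM) : ℤ := v.charge_exists.choose

theorem exists_seq_lt (v : SIM) (k : ℤ) : ∃ n, v.seq n < k := by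
  obtain ⟨m, N, hN⟩ := v.charge_exists
  refine ⟨max N (m - k + 1).toNat, ?_⟩
  rw [hN _ (le_max_left _ _)]
  have h1 : (m - k + 1).toNat ≤ max N (m - k + 1).toNat := le_max_right _ _
  omega

/-- The position at which `k` is inserted into `v`: the number of entries of `v`
that are greater than `k` (assuming `k` does not occur in `v`). -/
noncomputable def insIdx (v : SIM) (k : ℤ) : ℕ := sInf {n : ℕ | v.seq n < k}

/-- The monomial obtained from `v` by inserting the entry `k`
(meaningful when `k` does not occur among the entries of `v`; in the unused
case where `k` does occur we simply return `v`). -/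
noncomputable def insert (v : SIM) (k : ℤ) : SIM :=
  if h : k ∈ Set.range v.seq then v
  else
    { seq := fun n =>
        if n < v.insIdx k then v.seq n else if n = v.insIdx k then k else v.seq (n - 1)
      strictAnti := by
        have hs : v.seq (v.insIdx k) < k := Nat.sInf_mem (v.exists_seq_lt k)
        have hgt : ∀ n, n < v.insIdx k → k < v.seq n := by
          intro n hn
          have h1 : ¬ v.seq n < k := Nat.notMem_of_lt_sInf hn
          have h2 : v.seq n ≠ k := fun hh => h ⟨n, hh⟩
          omega
        apply strictAnti_nat_of_succ_lt
        intro n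

        rcases lt_trichotomy (n + 1) (v.insIdx k) with h1 | h1 | h1
        · rw [if_pos h1, if_pos (by omega)]
          exact v.strictAnti (Nat.lt_succ_self n)
        · rw [if_neg (by omega), if_pos h1, if_pos (by omega)]
          exact hgt n (by omega)
        · rw [if_neg (by omega), if_neg (by omega)]
          rcases eq_or_lt_of_le (Nat.le_of_lt_succ h1) with h2 | h2
          · rw [if_neg (by omega), if_pos h2.symm]
            simpa [← h2] using hs
          · rw [if_neg (by omega), if_neg (by omega)]
            exact v.strictAnti (by omega)
      charge_exists := by
        obtain ⟨m, N, hN⟩ := v.charge_exists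
        refine ⟨m + 1, max N (v.insIdx k) + 1, fun n hn => ?_⟩

        beta_reduce
        rw [if_neg (by omega), if_neg (by omega), hN (n - 1) (by omega)]
        omega }

/-- The position of the entry `k` in `v` (assuming `k` occurs in `v`). -/
noncomputable def delIdx (v : SIM) (k : ℤ) : ℕ := sInf {n : ℕ | v.seq n ≤ k}

/-- The monomial obtained from `v` by deleting the entry `k`
(meaningful when `k` occurs among the entries of `v`). -/
noncomputable def delete (v : SIM) (k : ℤ) : SIM where
  seq n := if n < v.delIdx k then v.seq n else v.seq (n + 1)
  strictAnti := by
    apply strictAnti_nat_of_succ_lt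
    intro n

    split_ifs <;> exact v.strictAnti (by omega)
  charge_exists := by
    obtain ⟨m, N, hN⟩ := v.charge_exists
    refine ⟨m - 1, max N (v.delIdx k), fun n hn => ?_⟩

    beta_reduce
    rw [if_neg (by omega), hN (n + 1) (by omega)]
    omega

end SIM

/-- The fermionic Fock space: the free ℂ-vector space on the set of all
semi-infinite monomials (of all charges). -/
abbrev Fock : Type := SIM →₀ ℂ

/-- The wedging operator `ψ(k)`: it sends a basis monomial `i₀ > i₁ > ⋯` to `0`
if `k = i_s` for some `s`, and otherwise to `(−1)^s` times the basis monomial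
obtained by inserting `k`, where `s` is the number of entries greater
than `k`. -/
noncomputable def psi (k : ℤ) : Fock →ₗ[ℂ] Fock :=
  Finsupp.lsum ℂ fun v =>
    if k ∈ Set.range v.seq then 0
    else ((-1 : ℂ) ^ v.insIdx k) • Finsupp.lsingle (v.insert k)

/-- The contracting operator `ψ*(k)`: it sends a basis monomial `i₀ > i₁ > ⋯`
to `(−1)^s` times the basis monomial obtained by deleting `i_s` if `k = i_s`,
and to `0` if `k` does not occur among the entries. -/
noncomputable def psiStar (k : ℤ) : Fock →ₗ[ℂ] Fock :=
  Finsupp.lsum ℂ fun v =>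
    if k ∈ Set.range v.seq then ((-1 : ℂ) ^ v.delIdx k) • Finsupp.lsingle (v.delete k)
    else 0

/-- The `r`-colored fermionic Fock space `𝓕^r`: the free ℂ-vector space on the
set of `r`-tuples of semi-infinite monomials. -/
abbrev FockR (r : ℕ) : Type := (Fin r → SIM) →₀ ℂ

/-- The colored wedging operator `ψ_i(k)` on `𝓕^r`: it applies `ψ(k)` to the
`i`-th component of a basis tuple and multiplies by the sign
`(−1)^{c₀ + ⋯ + c_{i−1}}`, where `c_j` is the charge of the `j`-th
component. -/
noncomputable def psiC (r : ℕ) (i : Fin r) (k : ℤ) : FockR r →ₗ[ℂ] FockR r :=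
  Finsupp.lsum ℂ fun w =>
    if k ∈ Set.range (w i).seq then 0
    else ((-1 : ℂ) ^ (∑ j ∈ Finset.Iio i, (w j).charge)) •
      ((-1 : ℂ) ^ (w i).insIdx k) •
        Finsupp.lsingle (Function.update w i ((w i).insert k))

/-- The colored contracting operator `ψ*_i(k)` on `𝓕^r`: it applies `ψ*(k)` to
the `i`-th component of a basis tuple and multiplies by the sign
`(−1)^{c₀ + ⋯ + c_{i−1}}`, where `c_j` is the charge of the `j`-th
component. -/
noncomputable def psiStarC (r : ℕ) (i : Fin r) (k : ℤ) : FockR r →ₗ[ℂ] FockR r :=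
  Finsupp.lsum ℂ fun w =>
    if k ∈ Set.range (w i).seq then
      ((-1 : ℂ) ^ (∑ j ∈ Finset.Iio i, (w j).charge)) •
        ((-1 : ℂ) ^ (w i).delIdx k) •
          Finsupp.lsingle (Function.update w i ((w i).delete k))
    else 0

/-!
Every operator in play sends a basis tuple `w` either to `0` or to `±` the tuple obtained by
toggling one mode `(i, k)` (color `i`, integer `k`), with sign `(-1)^N`, where
`N = c₀ + ⋯ + c_{i-1} + #{entries of wⁱ above k}`. Toggling another mode `(j, l)` leaves the
occupation of `(i, k)` unchanged and flips this sign exactly when `(j, l)` precedes `(i, k)`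
in the order by color and then by decreasing integer, because it changes `c_j` and the count
above `k` by one. Of two distinct modes exactly one precedes the other, so the two composites
of an anticommutator produce the same tuple with opposite signs. For a single mode,
`ψ_i(k) ψ*_i(k)` and `ψ*_i(k) ψ_i(k)` act on complementary sets of basis tuples, each as the
identity.
-/

namespace SIM

theorem eq_of_range_eq {v w : SIM} (h : Set.range v.seq = Set.range w.seq) : v = w := by
  obtain ⟨f, hf, _⟩ := v
  obtain ⟨g, hg, _⟩ := w
  obtain rfl : f = g := (hf.dual_right.range_inj hg.dual_right).mp h
  rfl

theorem lt_delIdx_iff {v : SIM} {k : ℤ} {n : ℕ} : n < v.delIdx k ↔ k < v.seq n := by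
  refine ⟨fun hn => not_le.mp (Nat.notMem_of_lt_sInf hn), fun hn => ?_⟩
  obtain ⟨m, hm⟩ := v.exists_seq_lt k
  have hmem : v.seq (v.delIdx k) ≤ k := Nat.sInf_mem (s := {n | v.seq n ≤ k}) ⟨m, hm.le⟩
  by_contra hle
  have := v.strictAnti.antitone (not_lt.mp hle)
  omega

theorem delIdx_seq (v : SIM) (n : ℕ) : v.delIdx (v.seq n) = n :=
  eq_of_forall_lt_iff fun _ => lt_delIdx_iff.trans v.strictAnti.lt_iff_gt

theorem insIdx_eq_delIdx {v : SIM} {k : ℤ} (hk : k ∉ Set.range v.seq) :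
    v.insIdx k = v.delIdx k := by
  have h : ∀ n, v.seq n ≠ k := fun n hn => hk ⟨n, hn⟩
  unfold insIdx delIdx
  congr 1
  ext n
  exact lt_iff_le_and_ne.trans (and_iff_left (h n))

theorem insert_seq {v : SIM} {k : ℤ} (hk : k ∉ Set.range v.seq) (n : ℕ) :
    (v.insert k).seq n =
      if n < v.delIdx k then v.seq n else if n = v.delIdx k then k else v.seq (n - 1) := by
  simp [SIM.insert, hk, insIdx_eq_delIdx hk]

theorem delete_seq (v : SIM) (k : ℤ) (n : ℕ) :
    (v.delete k).seq n = if n < v.delIdx k then v.seq n else v.seq (n + 1) := rfl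

theorem range_insert {v : SIM} {k : ℤ} (hk : k ∉ Set.range v.seq) :
    Set.range (v.insert k).seq = Insert.insert k (Set.range v.seq) := by
  ext x
  simp only [Set.mem_range, Set.mem_insert_iff, insert_seq hk]
  constructor
  · rintro ⟨n, rfl⟩
    split_ifs
    exacts [Or.inr ⟨n, rfl⟩, Or.inl rfl, Or.inr ⟨n - 1, rfl⟩]
  · rintro (rfl | ⟨n, rfl⟩)
    · exact ⟨v.delIdx x, by simp⟩
    · rcases lt_or_ge n (v.delIdx k) with h | h
      · exact ⟨n, if_pos h⟩
      · exact ⟨n + 1, by rw [if_neg (by omega), if_neg (by omega), Nat.add_sub_cancel]⟩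

theorem range_delete {v : SIM} {k : ℤ} (hk : k ∈ Set.range v.seq) :
    Set.range (v.delete k).seq = Set.range v.seq \ {k} := by
  obtain ⟨d, rfl⟩ := hk
  ext x
  simp only [Set.mem_range, Set.mem_sdiff, Set.mem_singleton_iff, delete_seq, delIdx_seq]
  constructor
  · rintro ⟨n, rfl⟩
    split_ifs with h
    · exact ⟨⟨n, rfl⟩, v.strictAnti.injective.ne h.ne⟩
    · exact ⟨⟨n + 1, rfl⟩, v.strictAnti.injective.ne (by omega)⟩
  · rintro ⟨⟨m, rfl⟩, hm⟩
    rcases lt_or_gt_of_ne (mt (congrArg v.seq) hm) with h | h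
    · exact ⟨m, if_pos h⟩
    · exact ⟨m - 1, by rw [if_neg (by omega), Nat.sub_add_cancel (by omega)]⟩

noncomputable def toggle (v : SIM) (k : ℤ) : SIM :=
  if k ∈ Set.range v.seq then v.delete k else v.insert k

theorem range_toggle (v : SIM) (k : ℤ) :
    Set.range (v.toggle k).seq = symmDiff (Set.range v.seq) {k} := by
  unfold toggle
  split_ifs with hk
  · rw [range_delete hk, symmDiff_of_ge (Set.singleton_subset_iff.mpr hk)]
  · rw [range_insert hk, (Set.disjoint_singleton_right.mpr hk).symmDiff_eq_sup]
    exact Set.union_singleton.symm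

theorem toggle_toggle (v : SIM) (k : ℤ) : (v.toggle k).toggle k = v :=
  eq_of_range_eq <| by rw [range_toggle, range_toggle, symmDiff_symmDiff_cancel_right]

theorem toggle_comm (v : SIM) (k l : ℤ) : (v.toggle k).toggle l = (v.toggle l).toggle k :=
  eq_of_range_eq <| by simp only [range_toggle, symmDiff_right_comm]

theorem range_inter_Ioi_eq_image (v : SIM) (k : ℤ) :
    Set.range v.seq ∩ Set.Ioi k = v.seq '' Set.Iio (v.delIdx k) := by
  ext x
  simp only [Set.mem_inter_iff, Set.mem_range, Set.mem_Ioi, Set.mem_image, Set.mem_Iio,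
    lt_delIdx_iff]
  constructor
  · rintro ⟨⟨n, rfl⟩, h⟩
    exact ⟨n, h, rfl⟩
  · rintro ⟨n, h, rfl⟩
    exact ⟨⟨n, rfl⟩, h⟩

theorem delIdx_eq_ncard (v : SIM) (k : ℤ) :
    v.delIdx k = (Set.range v.seq ∩ Set.Ioi k).ncard := by
  rw [range_inter_Ioi_eq_image, Set.ncard_image_of_injective _ v.strictAnti.injective,
    Set.ncard_Iio_nat]

theorem delIdx_of_range_eq_insert {v v' : SIM} {l : ℤ} (hl : l ∉ Set.range v.seq)
    (h : Set.range v'.seq = Insert.insert l (Set.range v.seq)) (k : ℤ) :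
    v'.delIdx k = v.delIdx k + if k < l then 1 else 0 := by
  rw [delIdx_eq_ncard, delIdx_eq_ncard, h]
  split_ifs with hkl
  · have hfin : (Set.range v.seq ∩ Set.Ioi k).Finite := by
      rw [range_inter_Ioi_eq_image]
      exact (Set.finite_Iio _).image _
    rw [Set.insert_inter_of_mem (Set.mem_Ioi.mpr hkl), Set.ncard_insert_of_notMem (fun hm => hl hm.1) hfin]
  · rw [Set.insert_inter_of_notMem (mt Set.mem_Ioi.mp hkl), add_zero]

theorem neg_one_pow_delIdx_toggle (v : SIM) (k l : ℤ) :
    (-1 : ℂ) ^ (v.toggle l).delIdx k = (if k < l then -1 else 1) * (-1) ^ v.delIdx k := by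
  by_cases hl : l ∈ Set.range v.seq
  · have hl' : l ∉ Set.range (v.toggle l).seq := by
      simpa [range_toggle, Set.mem_symmDiff] using hl
    have h : Set.range v.seq = Insert.insert l (Set.range (v.toggle l).seq) := by
      rw [range_toggle, symmDiff_of_ge (Set.singleton_subset_iff.mpr hl),
        Set.insert_sdiff_singleton, Set.insert_eq_of_mem hl]
    rw [delIdx_of_range_eq_insert hl' h k]
    split_ifs <;> simp [pow_succ]
  · have h : Set.range (v.toggle l).seq = Insert.insert l (Set.range v.seq) := by
      simp only [toggle, if_neg hl, range_insert hl]
    rw [delIdx_of_range_eq_insert hl h k]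
    split_ifs <;> simp [pow_succ]

theorem hasCharge_charge (v : SIM) : v.HasCharge v.charge := v.charge_exists.choose_spec

theorem charge_eq_of_hasCharge {v : SIM} {m : ℤ} (h : v.HasCharge m) : v.charge = m := by
  obtain ⟨N₁, h₁⟩ := v.hasCharge_charge
  obtain ⟨N₂, h₂⟩ := h
  have e₁ := h₁ (max N₁ N₂) (le_max_left _ _)
  have e₂ := h₂ (max N₁ N₂) (le_max_right _ _)
  omega

theorem charge_insert {v : SIM} {k : ℤ} (hk : k ∉ Set.range v.seq) :
    (v.insert k).charge = v.charge + 1 := by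
  apply charge_eq_of_hasCharge
  obtain ⟨N, hN⟩ := v.hasCharge_charge
  refine ⟨max (N + 1) (v.delIdx k + 1), fun n hn => ?_⟩
  rw [insert_seq hk, if_neg (by omega), if_neg (by omega), hN (n - 1) (by omega)]
  omega

theorem charge_delete (v : SIM) (k : ℤ) : (v.delete k).charge = v.charge - 1 := by
  apply charge_eq_of_hasCharge
  obtain ⟨N, hN⟩ := v.hasCharge_charge
  refine ⟨max N (v.delIdx k), fun n hn => ?_⟩
  rw [delete_seq, if_neg (by omega), hN (n + 1) (by omega)]
  omega

theorem neg_one_zpow_charge_toggle (v : SIM) (k : ℤ) :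
    (-1 : ℂ) ^ (v.toggle k).charge = -(-1) ^ v.charge := by
  unfold toggle
  split_ifs with hk
  · simp [charge_delete, zpow_sub_one₀]
  · simp [charge_insert hk, zpow_add_one₀]

end SIM

section WeightedRelabel

variable {R X : Type*} [CommRing R]

noncomputable def weightedRelabel (P : X → Prop) (ε : X → R) (f : X → X) :
    (X →₀ R) →ₗ[R] (X →₀ R) :=
  Finsupp.lsum R fun x => if P x then ε x • Finsupp.lsingle (f x) else 0

variable {P Q : X → Prop} {ε δ : X → R} {f g : X → X}

theorem weightedRelabel_single (x : X) (c : R) :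
    weightedRelabel P ε f (Finsupp.single x c) =
      if P x then Finsupp.single (f x) (ε x * c) else 0 := by
  unfold weightedRelabel
  rw [Finsupp.lsum_single]
  split_ifs <;> simp [Finsupp.smul_single]

theorem weightedRelabel_comp :
    weightedRelabel P ε f ∘ₗ weightedRelabel Q δ g =
      weightedRelabel (fun x => Q x ∧ P (g x)) (fun x => ε (g x) * δ x) (f ∘ g) := by
  refine Finsupp.lhom_ext fun x c => ?_
  simp only [LinearMap.comp_apply, weightedRelabel_single]
  by_cases hQ : Q x <;> by_cases hP : P (g x) <;>
    simp only [hQ, hP, and_self, and_true, and_false, if_true, if_false, map_zero,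
      weightedRelabel_single, mul_assoc, Function.comp_apply]

theorem weightedRelabel_anticomm_eq_zero
    (hPQ : ∀ x, Q x ∧ P (g x) ↔ P x ∧ Q (f x))
    (hfg : ∀ x, Q x → P (g x) → f (g x) = g (f x))
    (hεδ : ∀ x, Q x → P (g x) → ε (g x) * δ x + δ (f x) * ε x = 0) :
    weightedRelabel P ε f ∘ₗ weightedRelabel Q δ g +
      weightedRelabel Q δ g ∘ₗ weightedRelabel P ε f = 0 := by
  rw [weightedRelabel_comp, weightedRelabel_comp]
  refine Finsupp.lhom_ext fun x c => ?_
  simp only [LinearMap.add_apply, LinearMap.zero_apply, weightedRelabel_single,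
    Function.comp_apply]
  by_cases h : Q x ∧ P (g x)
  · rw [if_pos h, if_pos ((hPQ x).mp h), hfg x h.1 h.2, ← Finsupp.single_add, ← add_mul,
      hεδ x h.1 h.2, zero_mul, Finsupp.single_zero]
  · rw [if_neg h, if_neg (mt (hPQ x).mpr h), add_zero]

theorem weightedRelabel_anticomm_eq_id
    (hPQ : ∀ x, Q x ∧ P (g x) ↔ ¬(P x ∧ Q (f x)))
    (hfg : ∀ x, Q x → P (g x) → f (g x) = x ∧ ε (g x) * δ x = 1)
    (hgf : ∀ x, P x → Q (f x) → g (f x) = x ∧ δ (f x) * ε x = 1) :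
    weightedRelabel P ε f ∘ₗ weightedRelabel Q δ g +
      weightedRelabel Q δ g ∘ₗ weightedRelabel P ε f = LinearMap.id := by
  rw [weightedRelabel_comp, weightedRelabel_comp]
  refine Finsupp.lhom_ext fun x c => ?_
  simp only [LinearMap.add_apply, LinearMap.id_apply, weightedRelabel_single,
    Function.comp_apply]
  by_cases h : Q x ∧ P (g x)
  · obtain ⟨hx, hεδ⟩ := hfg x h.1 h.2
    rw [if_pos h, if_neg ((hPQ x).mp h), hx, hεδ, one_mul, add_zero]
  · have h' : P x ∧ Q (f x) := not_not.mp (mt (hPQ x).mpr h)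
    obtain ⟨hx, hεδ⟩ := hgf x h'.1 h'.2
    rw [if_neg h, if_pos h', hx, hεδ, one_mul, zero_add]

end WeightedRelabel

section Colored

variable {r : ℕ}

noncomputable def toggleAt (w : Fin r → SIM) (i : Fin r) (k : ℤ) : Fin r → SIM :=
  Function.update w i ((w i).toggle k)

theorem mem_range_toggleAt {w : Fin r → SIM} {i j : Fin r} {k l : ℤ} :
    k ∈ Set.range (toggleAt w j l i).seq ↔ (k ∈ Set.range (w i).seq ↔ ¬(i = j ∧ k = l)) := by
  unfold toggleAt
  rcases eq_or_ne i j with rfl | hij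
  · simp only [Function.update_self, SIM.range_toggle, Set.mem_symmDiff, Set.mem_singleton_iff]
    tauto
  · simp [hij]

theorem toggleAt_toggleAt_self (w : Fin r → SIM) (i : Fin r) (k : ℤ) :
    toggleAt (toggleAt w i k) i k = w := by
  simp [toggleAt, SIM.toggle_toggle]

theorem toggleAt_comm (w : Fin r → SIM) (i j : Fin r) (k l : ℤ) :
    toggleAt (toggleAt w j l) i k = toggleAt (toggleAt w i k) j l := by
  rcases eq_or_ne i j with rfl | hij
  · simp [toggleAt, SIM.toggle_comm]
  · simp [toggleAt, hij, Function.update_of_ne hij.symm, Function.update_comm hij]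

noncomputable def colorSign (w : Fin r → SIM) (i : Fin r) (k : ℤ) : ℂ :=
  (-1) ^ (∑ t ∈ Finset.Iio i, (w t).charge) * (-1) ^ (w i).delIdx k

theorem colorSign_mul_self (w : Fin r → SIM) (i : Fin r) (k : ℤ) :
    colorSign w i k * colorSign w i k = 1 := by
  rw [colorSign, mul_mul_mul_comm, ← mul_zpow, ← mul_pow]
  norm_num

theorem neg_one_zpow_sum_charge_update (w : Fin r → SIM) {j : Fin r} {u : SIM}
    (hu : (-1 : ℂ) ^ u.charge = -(-1) ^ (w j).charge) (i : Fin r) :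
    (-1 : ℂ) ^ (∑ t ∈ Finset.Iio i, (Function.update w j u t).charge) =
      (if j < i then -1 else 1) * (-1) ^ (∑ t ∈ Finset.Iio i, (w t).charge) := by
  split_ifs with hji
  · have hj : j ∈ Finset.Iio i := Finset.mem_Iio.mpr hji
    rw [← Finset.add_sum_erase _ _ hj, ← Finset.add_sum_erase _ _ hj,
      Finset.sum_congr rfl fun t ht => by rw [Function.update_of_ne (Finset.ne_of_mem_erase ht)],
      zpow_add₀ (by norm_num), zpow_add₀ (by norm_num), Function.update_self, hu, neg_one_mul,
      neg_mul]
  · rw [one_mul]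
    refine congrArg _ (Finset.sum_congr rfl fun t ht => ?_)
    rw [Function.update_of_ne]
    rintro rfl
    exact hji (Finset.mem_Iio.mp ht)

noncomputable def crossSign (j : Fin r) (l : ℤ) (i : Fin r) (k : ℤ) : ℂ :=
  if j < i ∨ j = i ∧ k < l then -1 else 1

theorem crossSign_add_crossSign {i j : Fin r} {k l : ℤ} (h : ¬(i = j ∧ k = l)) :
    crossSign j l i k + crossSign i k j l = 0 := by
  unfold crossSign
  rcases lt_trichotomy i j with hij | rfl | hij
  · simp [hij, hij.not_gt, hij.ne, hij.ne']
  · rcases lt_trichotomy k l with hkl | rfl | hkl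
    · simp [hkl, hkl.not_gt]
    · exact absurd ⟨rfl, rfl⟩ h
    · simp [hkl, hkl.not_gt]
  · simp [hij, hij.not_gt, hij.ne, hij.ne']

theorem colorSign_toggleAt (w : Fin r → SIM) (i j : Fin r) (k l : ℤ) :
    colorSign (toggleAt w j l) i k = crossSign j l i k * colorSign w i k := by
  unfold colorSign toggleAt crossSign
  rw [neg_one_zpow_sum_charge_update w (SIM.neg_one_zpow_charge_toggle _ _)]
  rcases eq_or_ne i j with rfl | hij
  · rw [Function.update_self, SIM.neg_one_pow_delIdx_toggle]
    simp only [lt_irrefl, false_or, true_and, if_false, one_mul]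
    split_ifs <;> ring
  · rw [Function.update_of_ne hij]
    simp only [Ne.symm hij, false_and, or_false]
    split_ifs <;> ring

end Colored

noncomputable def modeOp (r : ℕ) (occ : Prop) (i : Fin r) (k : ℤ) : FockR r →ₗ[ℂ] FockR r :=
  weightedRelabel (fun w => k ∈ Set.range (w i).seq ↔ occ) (fun w => colorSign w i k)
    (fun w => toggleAt w i k)

theorem psiC_eq_modeOp (r : ℕ) (i : Fin r) (k : ℤ) : psiC r i k = modeOp r False i k := by
  unfold psiC modeOp weightedRelabel
  congr 1
  funext w
  by_cases hk : k ∈ Set.range (w i).seq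
  · simp [hk]
  · simp [hk, smul_smul, colorSign, toggleAt, SIM.toggle, SIM.insIdx_eq_delIdx hk]

theorem psiStarC_eq_modeOp (r : ℕ) (i : Fin r) (k : ℤ) : psiStarC r i k = modeOp r True i k := by
  unfold psiStarC modeOp weightedRelabel
  congr 1
  funext w
  by_cases hk : k ∈ Set.range (w i).seq
  · simp [hk, smul_smul, colorSign, toggleAt, SIM.toggle]
  · simp [hk]

theorem modeOp_anticomm_of_ne {r : ℕ} (o o' : Prop) {i j : Fin r} {k l : ℤ}
    (h : ¬(i = j ∧ k = l)) :
    modeOp r o i k ∘ₗ modeOp r o' j l + modeOp r o' j l ∘ₗ modeOp r o i k = 0 := by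
  have h' : ¬(j = i ∧ l = k) := fun ⟨hji, hlk⟩ => h ⟨hji.symm, hlk.symm⟩
  refine weightedRelabel_anticomm_eq_zero (fun w => ?_) (fun w _ _ => toggleAt_comm w i j k l)
    (fun w _ _ => ?_)
  · simp only [mem_range_toggleAt, h, h', not_false_eq_true, iff_true]
    exact and_comm
  · rw [colorSign_toggleAt, colorSign_toggleAt]
    linear_combination colorSign w i k * colorSign w j l * crossSign_add_crossSign h

theorem modeOp_anticomm_self {r : ℕ} (o o' : Prop) (i : Fin r) (k : ℤ) :
    modeOp r o i k ∘ₗ modeOp r o' i k + modeOp r o' i k ∘ₗ modeOp r o i k =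
      if (o ↔ ¬o') then LinearMap.id else 0 := by
  have hself : ∀ w, colorSign (toggleAt w i k) i k * colorSign w i k = 1 := fun w => by
    rw [colorSign_toggleAt, mul_assoc, colorSign_mul_self, mul_one]
    simp [crossSign]
  split_ifs with ho
  · refine weightedRelabel_anticomm_eq_id (fun w => ?_)
      (fun w _ _ => ⟨toggleAt_toggleAt_self w i k, hself w⟩)
      (fun w _ _ => ⟨toggleAt_toggleAt_self w i k, hself w⟩)
    simp only [mem_range_toggleAt, and_self, not_true_eq_false, iff_false]
    tauto
  · refine weightedRelabel_anticomm_eq_zero (fun w => ?_) (fun w _ _ => rfl) (fun w h₁ h₂ => ?_)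
    · simp only [mem_range_toggleAt, and_self, not_true_eq_false, iff_false]
      tauto
    · simp only [mem_range_toggleAt, and_self, not_true_eq_false, iff_false] at h₂
      tauto

/-- The operators on the `r`-colored fermionic Fock space `𝓕^r` satisfy the
full `Cl^r` anti-commutation relations: for all colors `i, j` and integers
`k, l`, `ψ_i(k)ψ_j(l) + ψ_j(l)ψ_i(k) = 0`,
`ψ*_i(k)ψ*_j(l) + ψ*_j(l)ψ*_i(k) = 0`, and
`ψ_i(k)ψ*_j(l) + ψ*_j(l)ψ_i(k) = δ_{i,j}δ_{k,l}·id`. -/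
theorem colored_clifford_relations (r : ℕ) (i j : Fin r) (k l : ℤ) :
    psiC r i k ∘ₗ psiC r j l + psiC r j l ∘ₗ psiC r i k = 0 ∧
    psiStarC r i k ∘ₗ psiStarC r j l + psiStarC r j l ∘ₗ psiStarC r i k = 0 ∧
    psiC r i k ∘ₗ psiStarC r j l + psiStarC r j l ∘ₗ psiC r i k =
      if i = j ∧ k = l then (LinearMap.id : FockR r →ₗ[ℂ] FockR r) else 0 := by
  simp only [psiC_eq_modeOp, psiStarC_eq_modeOp]
  by_cases h : i = j ∧ k = l
  · obtain ⟨rfl, rfl⟩ := h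
    simp [modeOp_anticomm_self]
  · simp [modeOp_anticomm_of_ne _ _ h, h]
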